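/- There exists a universal integer N₃ such that for every symmetric log-concave function u on ℝ^n and every n ≥ N₃, ∫_{|x|>2√n} |x|³ u(x) dμ_n(x) ≤ e^{-n/2} ∫_{|x|<√n} u(x) dμ_n(x). -/

import Mathlib

open MeasureTheory Real

/-- The standard Gaussian measure on ℝⁿ. -/
noncomputable def stdGaussian (n : ℕ) : Measure (EuclideanSpace ℝ (Fin n)) :=
  volume.withDensity fun x =>
    ENNReal.ofReal ((2 * π) ^ (-(n : ℝ) / 2) * Real.exp (-‖x‖ ^ 2 / 2))

/-- A symmetric (even) log-concave function on ℝⁿ. -/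
def IsSymmLogConcave (n : ℕ) (f : EuclideanSpace ℝ (Fin n) → ℝ) : Prop :=
  (∀ x, 0 ≤ f x) ∧ (∀ x, f (-x) = f x) ∧
    ∀ x y : EuclideanSpace ℝ (Fin n), ∀ l : ℝ, 0 < l → l < 1 →
      f x ^ l * f y ^ (1 - l) ≤ f (l • x + (1 - l) • y)

/-!
Split the tail `‖x‖ > 2√n` into the shells `2√n q^k ≤ ‖x‖ < 2√n q^(k+1)`, `q = 9/8`. The
dilation by `c = 1/(2q^(k+1)) ≤ 1/2` maps the `k`-th shell into the ball of radius `√n`. Under it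
`u` can only grow (an even log-concave function decreases along rays from the origin), the
Gaussian density gains at least `exp(-(3/8)‖x‖²)` because `1 - c² ≥ 3/4`, and the Jacobian costs
`c^(-n)`. For large `n` the Gaussian gain beats the Jacobian and the weight `‖x‖³` by a factor
`e^(-n/2) 2^(-(k+1))`, which sums to `e^(-n/2)`. Measurability of `u` comes from the convexity of
its superlevel sets.
-/

open Set ENNReal Filter Module

section AddHaar

variable {E : Type*} [NormedAddCommGroup E] [NormedSpace ℝ E] [MeasurableSpace E] [BorelSpace E]
  [FiniteDimensional ℝ E] (μ : Measure E) [μ.IsAddHaarMeasure]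

theorem QuasiconcaveOn.aemeasurable {f : E → ℝ} (hf : QuasiconcaveOn ℝ univ f) :
    AEMeasurable f μ := by
  refine NullMeasurable.aemeasurable (measurable_of_Ici fun r => ?_)
  change NullMeasurableSet {x | r ≤ f x} μ
  simpa using (hf r).nullMeasurableSet μ

theorem lintegral_comp_smul (g : E → ℝ≥0∞) {c : ℝ} (hc : c ≠ 0) :
    ∫⁻ x, g (c • x) ∂μ = ENNReal.ofReal |(c ^ finrank ℝ E)⁻¹| * ∫⁻ y, g y ∂μ := by
  have h := lintegral_map_equiv g (MeasurableEquiv.smul₀ c hc) (μ := μ)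
  rw [show ⇑(MeasurableEquiv.smul₀ c hc) = (c • ·) from rfl, Measure.map_addHaar_smul μ hc,
    lintegral_smul_measure] at h
  exact h.symm

theorem setLIntegral_le_of_le_comp_smul {f g : E → ℝ≥0∞} {S B : Set E} {c : ℝ} {K : ℝ≥0∞}
    (hc : c ≠ 0) (hK : K ≠ ∞) (hS : MeasurableSet S) (hB : MeasurableSet B)
    (hfg : ∀ x ∈ S, f x ≤ K * g (c • x)) (hSB : ∀ x ∈ S, c • x ∈ B) :
    ∫⁻ x in S, f x ∂μ ≤ K * ENNReal.ofReal |(c ^ finrank ℝ E)⁻¹| * ∫⁻ y in B, g y ∂μ := by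
  calc ∫⁻ x in S, f x ∂μ ≤ ∫⁻ x in S, K * B.indicator g (c • x) ∂μ :=
        setLIntegral_mono' hS fun x hx => by rw [indicator_of_mem (hSB x hx)]; exact hfg x hx
    _ ≤ ∫⁻ x, K * B.indicator g (c • x) ∂μ := setLIntegral_le_lintegral _ _
    _ = K * ENNReal.ofReal |(c ^ finrank ℝ E)⁻¹| * ∫⁻ y in B, g y ∂μ := by
        rw [lintegral_const_mul' _ _ hK, lintegral_comp_smul μ _ hc, lintegral_indicator hB,
          mul_assoc]

end AddHaar

namespace IsSymmLogConcave

variable {n : ℕ} {u : EuclideanSpace ℝ (Fin n) → ℝ}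

theorem le_apply_zero (hu : IsSymmLogConcave n u) (x : EuclideanSpace ℝ (Fin n)) :
    u x ≤ u 0 := by
  calc u x = u x ^ (1 / 2 : ℝ) * u (-x) ^ (1 - 1 / 2 : ℝ) := by
        rw [hu.2.1, ← Real.rpow_add' (hu.1 x) (by norm_num)]; norm_num
    _ ≤ u ((1 / 2 : ℝ) • x + (1 - 1 / 2 : ℝ) • -x) := hu.2.2 x (-x) _ (by norm_num) (by norm_num)
    _ = u 0 := by congr 1; module

theorem apply_le_apply_smul (hu : IsSymmLogConcave n u) {c : ℝ} (hc0 : 0 < c) (hc1 : c < 1)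
    (x : EuclideanSpace ℝ (Fin n)) : u x ≤ u (c • x) := by
  have h := hu.2.2 x 0 c hc0 hc1
  rw [smul_zero, add_zero] at h
  calc u x = u x ^ c * u x ^ (1 - c) := by
        rw [← Real.rpow_add' (hu.1 x) (by norm_num), add_sub_cancel, Real.rpow_one]
    _ ≤ u x ^ c * u 0 ^ (1 - c) := mul_le_mul_of_nonneg_left
        (Real.rpow_le_rpow (hu.1 x) (hu.le_apply_zero x) (by linarith))
        (Real.rpow_nonneg (hu.1 x) _)
    _ ≤ u (c • x) := h

theorem quasiconcaveOn (hu : IsSymmLogConcave n u) : QuasiconcaveOn ℝ univ u := by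
  intro r
  refine convex_iff_forall_pos.2 fun x hx y hy a b ha hb hab => ⟨trivial, ?_⟩
  obtain rfl : b = 1 - a := by linarith
  rcases le_or_gt r 0 with hr | hr
  · exact hr.trans (hu.1 _)
  calc r = r ^ a * r ^ (1 - a) := by rw [← Real.rpow_add hr, add_sub_cancel, Real.rpow_one]
    _ ≤ u x ^ a * u y ^ (1 - a) :=
        mul_le_mul (Real.rpow_le_rpow hr.le hx.2 ha.le) (Real.rpow_le_rpow hr.le hy.2 hb.le)
          (by positivity) (Real.rpow_nonneg (hu.1 x) a)
    _ ≤ u (a • x + (1 - a) • y) := hu.2.2 x y a ha (by linarith)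

theorem aemeasurable (hu : IsSymmLogConcave n u) (μ : Measure (EuclideanSpace ℝ (Fin n)))
    [μ.IsAddHaarMeasure] : AEMeasurable u μ :=
  hu.quasiconcaveOn.aemeasurable μ

end IsSymmLogConcave

theorem exp_neg_sq_half_le_mul_exp {a r c : ℝ} (hr : 0 ≤ r) (hra : r ≤ a) (hc : |c| ≤ 1 / 2) :
    exp (-a ^ 2 / 2) ≤ exp (-(3 / 8) * r ^ 2) * exp (-(c * a) ^ 2 / 2) := by
  have hc2 : c ^ 2 ≤ 1 / 4 := by nlinarith [sq_abs c, abs_nonneg c]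
  rw [← exp_add, exp_le_exp]
  nlinarith [mul_le_mul_of_nonneg_right hc2 (sq_nonneg a), mul_self_le_mul_self hr hra]

section Gaussian

variable {n : ℕ}

noncomputable def stdGaussianDensity (n : ℕ) (x : EuclideanSpace ℝ (Fin n)) : ℝ :=
  (2 * π) ^ (-(n : ℝ) / 2) * exp (-‖x‖ ^ 2 / 2)

theorem setLIntegral_stdGaussian (g : EuclideanSpace ℝ (Fin n) → ℝ≥0∞)
    {S : Set (EuclideanSpace ℝ (Fin n))} (hS : MeasurableSet S) :
    ∫⁻ x in S, g x ∂stdGaussian n = ∫⁻ x in S, ENNReal.ofReal (stdGaussianDensity n x) * g x :=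
  setLIntegral_withDensity_eq_setLIntegral_mul_non_measurable _
    (by fun_prop) g hS (ae_of_all _ fun _ => ofReal_lt_top)

instance : IsLocallyFiniteMeasure (stdGaussian n) :=
  IsLocallyFiniteMeasure.withDensity_ofReal (by fun_prop)

theorem IsSymmLogConcave.setLIntegral_ball_lt_top {u : EuclideanSpace ℝ (Fin n) → ℝ}
    (hu : IsSymmLogConcave n u) (s : ℝ) :
    ∫⁻ x in {x | ‖x‖ < s}, ENNReal.ofReal (u x) ∂stdGaussian n < ∞ := by
  have hball : {x : EuclideanSpace ℝ (Fin n) | ‖x‖ < s} = Metric.ball 0 s := by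
    ext x; simp
  calc ∫⁻ x in {x | ‖x‖ < s}, ENNReal.ofReal (u x) ∂stdGaussian n
      ≤ ∫⁻ _ in {x | ‖x‖ < s}, ENNReal.ofReal (u 0) ∂stdGaussian n :=
        lintegral_mono fun x => ofReal_le_ofReal (hu.le_apply_zero x)
    _ < ∞ := by
        rw [setLIntegral_const, hball]
        exact mul_lt_top ofReal_lt_top measure_ball_lt_top

theorem IsSymmLogConcave.setLIntegral_shell_le {u : EuclideanSpace ℝ (Fin n) → ℝ}
    (hu : IsSymmLogConcave n u) {r R s : ℝ} (hr : 0 ≤ r) (hs : 0 < s) (hsR : 2 * s ≤ R) :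
    ∫⁻ x in {x | r ≤ ‖x‖ ∧ ‖x‖ < R}, ENNReal.ofReal (‖x‖ ^ 3 * u x) ∂stdGaussian n
      ≤ ENNReal.ofReal (R ^ 3 * exp (-(3 / 8) * r ^ 2) * (R / s) ^ n) *
        ∫⁻ x in {x | ‖x‖ < s}, ENNReal.ofReal (u x) ∂stdGaussian n := by
  have hR : 0 < R := by linarith
  set c := s / R with hc
  have hc0 : 0 < c := div_pos hs hR
  have hc_half : c ≤ 1 / 2 := by rw [hc, div_le_iff₀ hR]; linarith
  have hS : MeasurableSet {x : EuclideanSpace ℝ (Fin n) | r ≤ ‖x‖ ∧ ‖x‖ < R} :=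
    (measurableSet_le measurable_const measurable_norm).inter
      (measurableSet_lt measurable_norm measurable_const)
  have hB : MeasurableSet {x : EuclideanSpace ℝ (Fin n) | ‖x‖ < s} :=
    measurableSet_lt measurable_norm measurable_const
  have hnorm : ∀ x : EuclideanSpace ℝ (Fin n), ‖c • x‖ = c * ‖x‖ := fun x => by
    rw [norm_smul, Real.norm_of_nonneg hc0.le]
  have hdet : |(c ^ finrank ℝ (EuclideanSpace ℝ (Fin n)))⁻¹| = (R / s) ^ n := by
    rw [finrank_euclideanSpace_fin, abs_of_pos (by positivity), hc, ← inv_pow, inv_div]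
  rw [setLIntegral_stdGaussian _ hS, setLIntegral_stdGaussian _ hB, ← hdet,
    ofReal_mul (by positivity)]
  refine setLIntegral_le_of_le_comp_smul volume hc0.ne' ofReal_ne_top hS hB
    (fun x ⟨hrx, hxR⟩ => ?_) (fun x ⟨_, hxR⟩ => ?_)
  · have hgauss : exp (-‖x‖ ^ 2 / 2) ≤ exp (-(3 / 8) * r ^ 2) * exp (-‖c • x‖ ^ 2 / 2) := by
      rw [hnorm]
      exact exp_neg_sq_half_le_mul_exp hr hrx (by rwa [abs_of_pos hc0])
    rw [← ofReal_mul (by unfold stdGaussianDensity; positivity),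
      ← ofReal_mul (by unfold stdGaussianDensity; positivity), ← ofReal_mul (by positivity)]
    refine ofReal_le_ofReal ?_
    have hmono : ‖x‖ ^ 3 * u x ≤ R ^ 3 * u (c • x) :=
      mul_le_mul (pow_le_pow_left₀ (norm_nonneg x) hxR.le 3)
        (hu.apply_le_apply_smul hc0 (by linarith) x) (hu.1 x) (by positivity)
    unfold stdGaussianDensity
    calc (2 * π) ^ (-(n : ℝ) / 2) * exp (-‖x‖ ^ 2 / 2) * (‖x‖ ^ 3 * u x)
        = (2 * π) ^ (-(n : ℝ) / 2) * (‖x‖ ^ 3 * u x * exp (-‖x‖ ^ 2 / 2)) := by ring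
      _ ≤ (2 * π) ^ (-(n : ℝ) / 2) * (R ^ 3 * u (c • x) *
          (exp (-(3 / 8) * r ^ 2) * exp (-‖c • x‖ ^ 2 / 2))) :=
        mul_le_mul_of_nonneg_left (mul_le_mul hmono hgauss (exp_pos _).le
          (mul_nonneg (by positivity) (hu.1 (c • x)))) (by positivity)
      _ = _ := by ring
  · show ‖c • x‖ < s
    rw [hnorm, hc, div_mul_eq_mul_div, div_lt_iff₀ hR]
    exact mul_lt_mul_of_pos_left hxR hs

end Gaussian

theorem subset_iUnion_shells {E : Type*} [NormedAddCommGroup E] {a q : ℝ} (ha : 0 < a)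
    (hq : 1 < q) :
    {x : E | a < ‖x‖} ⊆ ⋃ k : ℕ, {x | a * q ^ k ≤ ‖x‖ ∧ ‖x‖ < a * q ^ (k + 1)} := by
  intro x hx
  obtain ⟨k, hk, hk'⟩ := exists_nat_pow_near ((one_le_div ha).2 hx.le) hq
  exact mem_iUnion.2 ⟨k, (le_div_iff₀' ha).1 hk, (div_lt_iff₀' ha).1 hk'⟩

/-- The factor given by `setLIntegral_shell_le` for the shell `2 s q^k ≤ ‖x‖ < 2 s q^(k+1)`. -/
noncomputable def shellCoeff (n : ℕ) (s q : ℝ) (k : ℕ) : ℝ :=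
  (2 * s * q ^ (k + 1)) ^ 3 * exp (-(3 / 8) * (2 * s * q ^ k) ^ 2) * (2 * q ^ (k + 1)) ^ n

theorem IsSymmLogConcave.setLIntegral_tail_le {n : ℕ} {u : EuclideanSpace ℝ (Fin n) → ℝ}
    (hu : IsSymmLogConcave n u) {s q : ℝ} (hs : 0 < s) (hq : 1 < q) :
    ∫⁻ x in {x | 2 * s < ‖x‖}, ENNReal.ofReal (‖x‖ ^ 3 * u x) ∂stdGaussian n
      ≤ (∑' k, ENNReal.ofReal (shellCoeff n s q k)) *
        ∫⁻ x in {x | ‖x‖ < s}, ENNReal.ofReal (u x) ∂stdGaussian n := by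
  calc ∫⁻ x in {x | 2 * s < ‖x‖}, ENNReal.ofReal (‖x‖ ^ 3 * u x) ∂stdGaussian n
      ≤ ∫⁻ x in ⋃ k : ℕ, {x | 2 * s * q ^ k ≤ ‖x‖ ∧ ‖x‖ < 2 * s * q ^ (k + 1)},
          ENNReal.ofReal (‖x‖ ^ 3 * u x) ∂stdGaussian n :=
        lintegral_mono_set (subset_iUnion_shells (by positivity) hq)
    _ ≤ ∑' k : ℕ, ∫⁻ x in {x | 2 * s * q ^ k ≤ ‖x‖ ∧ ‖x‖ < 2 * s * q ^ (k + 1)},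
          ENNReal.ofReal (‖x‖ ^ 3 * u x) ∂stdGaussian n := lintegral_iUnion_le _ _
    _ ≤ ∑' k, ENNReal.ofReal (shellCoeff n s q k) *
          ∫⁻ x in {x | ‖x‖ < s}, ENNReal.ofReal (u x) ∂stdGaussian n := by
        refine ENNReal.tsum_le_tsum fun k => ?_
        have hq_pow : 1 ≤ q ^ (k + 1) := one_le_pow₀ hq.le
        have hratio : 2 * s * q ^ (k + 1) / s = 2 * q ^ (k + 1) := by field_simp
        have h := hu.setLIntegral_shell_le (by positivity) hs (by nlinarith)
          (r := 2 * s * q ^ k) (R := 2 * s * q ^ (k + 1))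
        rwa [hratio] at h
    _ = _ := ENNReal.tsum_mul_right

theorem shellCoeff_le {n : ℕ} {q : ℝ} (hn : 1 ≤ n) (hq : 9 / 8 ≤ q) (k : ℕ)
    (hA : 8 * q ^ 3 * (n : ℝ) ^ 2 * (2 * q * exp (-1)) ^ n ≤ 1 / 2)
    (hB : q ^ 3 * (q * exp (-(3 / 16))) ^ n ≤ 1 / 2) :
    shellCoeff n (√n) q k ≤ exp (-(n : ℝ) / 2) / 2 / 2 ^ k := by
  have hn' : (1 : ℝ) ≤ n := by exact_mod_cast hn
  have hs1 : 1 ≤ √n := one_le_sqrt.2 hn'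
  have hsq : √n ^ 2 = n := sq_sqrt (Nat.cast_nonneg n)
  have hs3 : √n ^ 3 ≤ (n : ℝ) ^ 2 := by nlinarith
  have hgauss : exp (-(3 / 8) * (2 * √n * q ^ k) ^ 2)
      ≤ exp (-(n : ℝ) / 2) * exp (-1) ^ n * (exp (-(3 / 16)) ^ n) ^ k := by
    have hqk : 1 + k * (1 / 8 : ℝ) ≤ q ^ k :=
      (one_add_mul_le_pow (by norm_num) k).trans (pow_le_pow_left₀ (by norm_num) (by linarith) k)
    have hqk2 : 1 + k * (1 / 8 : ℝ) ≤ (q ^ k) ^ 2 := by nlinarith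
    rw [← exp_nat_mul, ← exp_nat_mul, ← exp_nat_mul, ← exp_add, ← exp_add, exp_le_exp, mul_pow,
      mul_pow, hsq]
    nlinarith [mul_le_mul_of_nonneg_left hqk2 (by linarith : (0 : ℝ) ≤ n)]
  calc shellCoeff n (√n) q k
      = 8 * q ^ 3 * √n ^ 3 * (2 * q) ^ n * (q ^ k) ^ (n + 3) *
          exp (-(3 / 8) * (2 * √n * q ^ k) ^ 2) := by
        rw [shellCoeff]; ring
    _ ≤ 8 * q ^ 3 * (n : ℝ) ^ 2 * (2 * q) ^ n * (q ^ k) ^ (n + 3) *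
          (exp (-(n : ℝ) / 2) * exp (-1) ^ n * (exp (-(3 / 16)) ^ n) ^ k) := by
        gcongr
    _ = exp (-(n : ℝ) / 2) * (8 * q ^ 3 * (n : ℝ) ^ 2 * (2 * q * exp (-1)) ^ n) *
          (q ^ 3 * (q * exp (-(3 / 16))) ^ n) ^ k := by
        ring
    _ ≤ exp (-(n : ℝ) / 2) * (1 / 2) * (1 / 2) ^ k := by gcongr
    _ = exp (-(n : ℝ) / 2) / 2 / 2 ^ k := by rw [one_div_pow]; ring

theorem eventually_tsum_shellCoeff_le :
    ∀ᶠ n : ℕ in atTop, ∑' k, ENNReal.ofReal (shellCoeff n (√n) (9 / 8) k)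
      ≤ ENNReal.ofReal (exp (-(n : ℝ) / 2)) := by
  have ha : |2 * (9 / 8) * exp (-1)| < 1 := by
    rw [abs_of_pos (by positivity), exp_neg, ← div_eq_mul_inv, div_lt_one (exp_pos 1)]
    linarith [exp_one_gt_d9]
  have hb : |9 / 8 * exp (-(3 / 16))| < 1 := by
    rw [abs_of_pos (by positivity), exp_neg, ← div_eq_mul_inv, div_lt_one (exp_pos _)]
    linarith [add_one_le_exp (3 / 16)]
  have hA := (((tendsto_pow_const_mul_const_pow_of_abs_lt_one 2 ha).const_mul
    (8 * (9 / 8) ^ 3)).eventually (ge_mem_nhds (by norm_num : (8 * (9 / 8) ^ 3 : ℝ) * 0 < 1 / 2)))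
  have hB := (((tendsto_pow_atTop_nhds_zero_of_abs_lt_one hb).const_mul
    ((9 / 8) ^ 3)).eventually (ge_mem_nhds (by norm_num : ((9 / 8) ^ 3 : ℝ) * 0 < 1 / 2)))
  filter_upwards [hA, hB, eventually_ge_atTop 1] with n hA hB hn
  calc ∑' k, ENNReal.ofReal (shellCoeff n (√n) (9 / 8) k)
      ≤ ∑' k : ℕ, ENNReal.ofReal (exp (-(n : ℝ) / 2) / 2 / 2 ^ k) :=
        ENNReal.tsum_le_tsum fun k => ofReal_le_ofReal
          (shellCoeff_le hn le_rfl k (by simpa only [mul_assoc] using hA) hB)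
    _ = ENNReal.ofReal (exp (-(n : ℝ) / 2)) := by
        rw [← ENNReal.ofReal_tsum_of_nonneg (fun k => by positivity)
          (summable_geometric_two' _), tsum_geometric_two']

/-- There is a universal integer `N₃` such that for every symmetric log-concave `u` on ℝⁿ
with `n ≥ N₃`,
`∫_{|x| > 2√n} |x|³ u(x) dμₙ ≤ e^{−n/2} ∫_{|x| < √n} u(x) dμₙ`. -/
theorem tail_moment_bound :
    ∃ N₃ : ℕ, ∀ n : ℕ, N₃ ≤ n → ∀ u : EuclideanSpace ℝ (Fin n) → ℝ,
      IsSymmLogConcave n u →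
      ∫ x in {x : EuclideanSpace ℝ (Fin n) | 2 * Real.sqrt n < ‖x‖},
          ‖x‖ ^ 3 * u x ∂(stdGaussian n)
        ≤ Real.exp (-(n : ℝ) / 2) *
          ∫ x in {x : EuclideanSpace ℝ (Fin n) | ‖x‖ < Real.sqrt n}, u x ∂(stdGaussian n) := by
  obtain ⟨N, hN⟩ := eventually_atTop.1 (eventually_tsum_shellCoeff_le.and (eventually_ge_atTop 1))
  refine ⟨N, fun n hn u hu => ?_⟩
  obtain ⟨hcoeff, hn1⟩ := hN n hn
  have hs : 0 < √(n : ℝ) := sqrt_pos.2 (by exact_mod_cast hn1)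
  have hum : AEMeasurable u (stdGaussian n) :=
    (hu.aemeasurable volume).mono_ac (withDensity_absolutelyContinuous _ _)
  rw [integral_eq_lintegral_of_nonneg_ae (ae_of_all _ fun x => mul_nonneg (by positivity) (hu.1 x))
      ((measurable_norm.pow_const 3).aemeasurable.mul hum).restrict.aestronglyMeasurable,
    integral_eq_lintegral_of_nonneg_ae (ae_of_all _ hu.1) hum.restrict.aestronglyMeasurable]
  calc _ ≤ (ENNReal.ofReal (exp (-(n : ℝ) / 2)) *
        ∫⁻ x in {x | ‖x‖ < √n}, ENNReal.ofReal (u x) ∂stdGaussian n).toReal :=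
        toReal_mono (mul_ne_top ofReal_ne_top (hu.setLIntegral_ball_lt_top _).ne)
          ((hu.setLIntegral_tail_le hs (by norm_num)).trans
            (mul_le_mul_of_nonneg_right hcoeff zero_le))
    _ = _ := by rw [toReal_mul, toReal_ofReal (exp_pos _).le]
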